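/- Let D = {0, a, b, c} with 0 < a < c odd, b even, gcd(a,b,c) = 1, b = 2^t ℓ, c − a = 2^{t'} ℓ' (t, t' ≥ 1, ℓ, ℓ' odd). Then the set of real zeros of ξ ↦ 1 + e^{2πiaξ} + e^{2πibξ} + e^{2πicξ} equals R₁ ∪ R₂ ∪ R₃ if t = t', and equals R₁ ∪ R₂ if t ≠ t'. -/

import Mathlib

open MeasureTheory Finset Polynomial
open scoped Classical

noncomputable section

/-- The self-similar set `K(b, D)`, i.e. the attractor of the IFS
`{x ↦ (x+d)/b : d ∈ D}`, described by radix expansions. -/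
def Kset (b : ℕ) (D : Finset ℤ) : Set ℝ :=
  {x : ℝ | ∃ f : ℕ → ℤ, (∀ n, f n ∈ D) ∧
    HasSum (fun n : ℕ => (f n : ℝ) / (b : ℝ) ^ (n + 1)) x}

/-- `J` is a tiling set for `K`: translates of `K` by `J` cover `ℝ` up to a null
set and overlap in null sets. -/
def IsTilingSet (J K : Set ℝ) : Prop :=
  J.Countable ∧
  volume ((⋃ t ∈ J, (fun x : ℝ => x + t) '' K)ᶜ) = 0 ∧
  ∀ t₁ ∈ J, ∀ t₂ ∈ J, t₁ ≠ t₂ →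
    volume (((fun x : ℝ => x + t₁) '' K) ∩ ((fun x : ℝ => x + t₂) '' K)) = 0

def IsTile (K : Set ℝ) : Prop := ∃ J : Set ℝ, IsTilingSet J K

/-- The exponential `e_λ(x) = exp(2πiλx)`. -/
def expChar (lam x : ℝ) : ℂ :=
  Complex.exp (2 * (Real.pi : ℂ) * Complex.I * (lam : ℂ) * (x : ℂ))

/-- The exponentials indexed by `Λ` are pairwise orthogonal in `L²(μ)`. -/
def IsOrthogonalSetFor (Λ : Set ℝ) (μ : Measure ℝ) : Prop :=
  ∀ l₁ ∈ Λ, ∀ l₂ ∈ Λ, l₁ ≠ l₂ →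
    ∫ x : ℝ, expChar l₁ x * (starRingEnd ℂ) (expChar l₂ x) ∂μ = 0

/-- `Λ` is a spectrum of the measure `μ`: `0 ∈ Λ`, the exponentials `e_λ, λ ∈ Λ`
are pairwise orthogonal in `L²(μ)`, and their span is dense in `L²(μ)`
(equivalently, only the zero element of `L²(μ)` is orthogonal to all of them). -/
def IsSpectrumOfMeasure (Λ : Set ℝ) (μ : Measure ℝ) : Prop :=
  Λ.Countable ∧ (0 : ℝ) ∈ Λ ∧ IsOrthogonalSetFor Λ μ ∧
  ∀ f : ℝ → ℂ, MemLp f 2 μ →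
    (∀ lam ∈ Λ, ∫ x : ℝ, f x * (starRingEnd ℂ) (expChar lam x) ∂μ = 0) →
    f =ᵐ[μ] 0

/-- A set of positive finite Lebesgue measure is spectral if `L²(K)` admits an
orthogonal family of exponentials spanning a dense subspace. -/
def IsSpectralSet (K : Set ℝ) : Prop :=
  ∃ Λ : Set ℝ, IsSpectrumOfMeasure Λ (volume.restrict K)

/-- `Γ` is a spectrum of the finite set `A ⊂ ℤ` (w.r.t. the normalized counting
measure on `A`): `#Γ = #A` and the exponentials are pairwise orthogonal. -/
def IsSpectrumOfIntFinset (Γ : Finset ℝ) (A : Finset ℤ) : Prop :=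
  Γ.card = A.card ∧
  ∀ l₁ ∈ Γ, ∀ l₂ ∈ Γ, l₁ ≠ l₂ →
    ∑ a ∈ A, Complex.exp (2 * (Real.pi : ℂ) * Complex.I * ((l₁ - l₂ : ℝ) : ℂ) * (a : ℂ)) = 0

def IsSpectralIntFinset (A : Finset ℤ) : Prop :=
  ∃ Γ : Finset ℝ, IsSpectrumOfIntFinset Γ A

/-- `μ` is the self-similar measure of the pair `(b, D)`. -/
def IsSelfSimilarMeasure (b : ℕ) (D : Finset ℤ) (μ : Measure ℝ) : Prop :=
  IsProbabilityMeasure μ ∧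
  μ = (D.card : ENNReal)⁻¹ • ∑ d ∈ D, Measure.map (fun x : ℝ => (x + (d : ℝ)) / (b : ℝ)) μ

/-- `A` is an integer tile: `A ⊕ B ≡ ℤ_n (mod n)` for some `n` and finite `B`. -/
def IsIntegerTile (A : Finset ℤ) : Prop :=
  ∃ n : ℕ, 0 < n ∧ ∃ B : Finset ℤ,
    ∀ r : ZMod n, ∃! p : ℤ × ℤ, p.1 ∈ A ∧ p.2 ∈ B ∧ ((p.1 + p.2 : ℤ) : ZMod n) = r

/-- The sumset `E 0 + E 1 + ⋯ + E k`. -/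
def famSum (k : ℕ) (E : ℕ → Finset ℤ) : Finset ℤ :=
  (Fintype.piFinset fun i : Fin (k + 1) => E i.val).image fun f => ∑ i, f i

/-- The sum `E 0 ⊕ E 1 ⊕ ⋯ ⊕ E k` is direct: all sums are distinct. -/
def FamilyUniqueSums (k : ℕ) (E : ℕ → Finset ℤ) : Prop :=
  ∀ f g : Fin (k + 1) → ℤ, (∀ i, f i ∈ E i.val) → (∀ i, g i ∈ E i.val) →
    ∑ i, f i = ∑ i, g i → f = g

/-- `F` is a complete residue system modulo `b`. -/
def IsCompleteResidueSystem (b : ℕ) (F : Finset ℤ) : Prop :=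
  ∀ r : ZMod b, ∃! x, x ∈ F ∧ (x : ZMod b) = r

/-- The product-form digit set `D = E₀ + b^{ℓ₁}E₁ + ⋯ + b^{ℓ_k}E_k` (with `ℓ 0 = 0`). -/
def Dprod (b k : ℕ) (E : ℕ → Finset ℤ) (ℓ : ℕ → ℕ) : Finset ℤ :=
  (Fintype.piFinset fun i : Fin (k + 1) => E i.val).image
    fun f => ∑ i, (b : ℤ) ^ (ℓ i.val) * f i

/-- The sum defining the product form is direct. -/
def ProdFormDirect (b k : ℕ) (E : ℕ → Finset ℤ) (ℓ : ℕ → ℕ) : Prop :=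
  ∀ f g : Fin (k + 1) → ℤ, (∀ i, f i ∈ E i.val) → (∀ i, g i ∈ E i.val) →
    ∑ i, (b : ℤ) ^ (ℓ i.val) * f i = ∑ i, (b : ℤ) ^ (ℓ i.val) * g i → f = g

/-- The set `A = ⊕_{i} ⊕_{j=0}^{ℓ_i - 1} b^j E_i` (the `i = 0` term is void when `ℓ 0 = 0`). -/
def Aset (b k : ℕ) (E : ℕ → Finset ℤ) (ℓ : ℕ → ℕ) : Finset ℤ :=
  (Fintype.piFinset fun q : Σ i : Fin (k + 1), Fin (ℓ i.val) => E q.1.val).image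
    fun f => ∑ q : Σ i : Fin (k + 1), Fin (ℓ i.val), (b : ℤ) ^ (q.2 : ℕ) * f q

/-- Mask polynomial `P_F(x) = ∑_{d ∈ F} x^d` of a finite set of nonnegative integers. -/
def maskPoly (F : Finset ℤ) : Polynomial ℤ := ∑ d ∈ F, Polynomial.X ^ d.toNat

/-- `Ψ(x) = ∏_{d ∈ S} Φ_d(x)` where `S = {d > 1 : d ∣ b, Φ_d ∣ P_F}`. -/
def PsiPoly (b : ℕ) (F : Finset ℤ) : Polynomial ℤ :=
  ∏ d ∈ b.divisors.filter (fun d => 1 < d ∧ cyclotomic d ℤ ∣ maskPoly F), cyclotomic d ℤ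

/-- `K_D^{(i)}(x) = Ψ₀(x)Ψ₁(x^{b^{ℓ₁}}) ⋯ Ψ_i(x^{b^{ℓ_i}})`. -/
def Kpoly (b : ℕ) (E : ℕ → Finset ℤ) (ℓ : ℕ → ℕ) (i : ℕ) : Polynomial ℤ :=
  ∏ j ∈ Finset.range (i + 1), Polynomial.expand ℤ (b ^ (ℓ j)) (PsiPoly b (E j))

/-- `nIdx Q = lcm {s ≥ 1 : Φ_s ∣ Q}` (any `s` with `Φ_s ∣ Q` satisfies
`φ(s) ≤ deg Q`, hence `s ≤ 2 (deg Q + 1)²`, so the range is exhaustive). -/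
def nIdx (Q : Polynomial ℤ) : ℕ :=
  ((Finset.Icc 1 (2 * (Q.natDegree + 1) ^ 2)).filter fun s => cyclotomic s ℤ ∣ Q).lcm id

/-- `F' ≡ F (mod n)`: each element of `F` is changed by some integer multiple of `n`
(keeping the elements distinct). -/
def ModSet (n : ℕ) (F F' : Finset ℤ) : Prop :=
  ∃ g : ℤ → ℤ, F' = F.image g ∧ (∀ x ∈ F, (n : ℤ) ∣ g x - x) ∧ F'.card = F.card

/-- The sumset `Dprev + b^{ℓi} Ei`. -/
def stepSum (b : ℕ) (ℓi : ℕ) (Dprev Ei : Finset ℤ) : Finset ℤ :=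
  (Dprev ×ˢ Ei).image fun p => p.1 + (b : ℤ) ^ ℓi * p.2

/-- The sum `Dprev ⊕ b^{ℓi} Ei` is direct. -/
def StepDirect (b : ℕ) (ℓi : ℕ) (Dprev Ei : Finset ℤ) : Prop :=
  ∀ d₁ ∈ Dprev, ∀ e₁ ∈ Ei, ∀ d₂ ∈ Dprev, ∀ e₂ ∈ Ei,
    d₁ + (b : ℤ) ^ ℓi * e₁ = d₂ + (b : ℤ) ^ ℓi * e₂ → d₁ = d₂ ∧ e₁ = e₂

/-- `Dseq` is the sequence `D^{(0)}, …, D^{(k)}` of the modulo product-form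
construction for `E₀ ⊕ ⋯ ⊕ E_k = ℤ_b` and `0 = ℓ₀ ≤ ℓ₁ ≤ ⋯ ≤ ℓ_k`:
`D^{(0)} ≡ E₀ (mod n₀)` and `D^{(i)} ≡ D^{(i-1)} ⊕ b^{ℓ_i}E_i (mod n_i)`. -/
def IsModuloProductForm (b k : ℕ) (E : ℕ → Finset ℤ) (ℓ : ℕ → ℕ)
    (Dseq : ℕ → Finset ℤ) : Prop :=
  famSum k E = (Finset.range b).image (fun j => (j : ℤ)) ∧
  FamilyUniqueSums k E ∧
  ℓ 0 = 0 ∧ (∀ i j, i ≤ j → j ≤ k → ℓ i ≤ ℓ j) ∧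
  ModSet (nIdx (Kpoly b E ℓ 0)) (E 0) (Dseq 0) ∧
  ∀ i, 1 ≤ i → i ≤ k →
    StepDirect b (ℓ i) (Dseq (i - 1)) (E i) ∧
    ModSet (nIdx (Kpoly b E ℓ i)) (stepSum b (ℓ i) (Dseq (i - 1)) (E i)) (Dseq i)

/-- The double sum `⊕_{i=0}^{k-1} ⊕_{j=t_i}^{t_{i+1}-1} b^j F(k-i-1)`. -/
def doubleSum (b k : ℕ) (t : ℕ → ℕ) (F : ℕ → Finset ℤ) : Finset ℤ :=
  (Fintype.piFinset
      (fun q : Σ i : Fin k, {j : ℕ // j ∈ Finset.Ico (t i.val) (t (i.val + 1))} =>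
        F (k - q.1.val - 1))).image
    fun f => ∑ q : Σ i : Fin k, {j : ℕ // j ∈ Finset.Ico (t i.val) (t (i.val + 1))},
      (b : ℤ) ^ (q.2.val) * f q

/-- `𝒞_i = p̃_{i-1}·{0, 1, …, p_i − 1}` where `p̃_{i-1} = p₀⋯p_{i-1}`. -/
def Cset (p : ℕ → ℕ) (i : ℕ) : Finset ℤ :=
  (Finset.range (p i)).image fun j => (∏ l ∈ Finset.range i, (p l : ℤ)) * j

/-- The set of zeros of `ξ ↦ 1 + e^{2πiaξ} + e^{2πibξ} + e^{2πicξ}`. -/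
def maskZeroSet (a b c : ℤ) : Set ℝ :=
  {ξ : ℝ | (1 : ℂ) + Complex.exp (2 * (Real.pi : ℂ) * Complex.I * (a : ℂ) * (ξ : ℂ))
      + Complex.exp (2 * (Real.pi : ℂ) * Complex.I * (b : ℂ) * (ξ : ℂ))
      + Complex.exp (2 * (Real.pi : ℂ) * Complex.I * (c : ℂ) * (ξ : ℂ)) = 0}

/-- `(1/q)𝕆 = {m/q : m odd}`. -/
def oddFracSet (q : ℝ) : Set ℝ := {x | ∃ m : ℤ, Odd m ∧ x = (m : ℝ) / q}

/-- `⋃_{n ≥ 1} 4^n (1/q)𝕆`. -/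
def Zsc (q : ℝ) : Set ℝ :=
  {x | ∃ n : ℕ, 1 ≤ n ∧ ∃ m : ℤ, Odd m ∧ x = (4 : ℝ) ^ n * (m : ℝ) / q}

/-!
The summands `1, v, w, x` of the mask, with `v = e(aξ), w = e(bξ), x = e(cξ)` and
`e(r) = exp(2πir)`, lie on the unit circle, so conjugating their vanishing sum shows that
`vw + vx + wx + vwx` vanishes as well; adding the two gives `(1 + v)(1 + w)(1 + x) = 0`. Hence the summands cancel in pairs, i.e. `ξ` is a zero iff one of
`(aξ, (c-b)ξ)`, `(bξ, (c-a)ξ)`, `(cξ, (b-a)ξ)` lies in `(1/2)𝕆 × (1/2)𝕆`. For odd `m, n`,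
Bézout shows that `mξ, nξ ∈ (1/2)𝕆` iff `ξ ∈ (1/(2 gcd(m, n)))𝕆`, which yields `R₁` and `R₂`.
For the middle pair, `2^t ℓ ξ, 2^{t'} ℓ' ξ ∈ (1/2)𝕆` forces the 2-adic valuations to agree, so it
is impossible when `t ≠ t'` and gives `R₃` when `t = t'`.
-/

section
open Complex Real ComplexConjugate

theorem Complex.one_add_add_add_eq_zero_iff {v w x : ℂ} (hv : ‖v‖ = 1) (hw : ‖w‖ = 1)
    (hx : ‖x‖ = 1) :
    1 + v + w + x = 0 ↔
      (v = -1 ∧ w + x = 0) ∨ (w = -1 ∧ v + x = 0) ∨ (x = -1 ∧ v + w = 0) := by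
  have mul_conj_eq_one {z : ℂ} (hz : ‖z‖ = 1) : z * conj z = 1 := by
    rw [Complex.mul_conj, Complex.normSq_eq_norm_sq, hz]; norm_num
  constructor
  · intro h
    have hc : 1 + conj v + conj w + conj x = 0 := by simpa using congrArg conj h
    have hprod : (1 + v) * (1 + w) * (1 + x) = 0 := by
      linear_combination h + v * w * x * hc - w * x * mul_conj_eq_one hv
        - v * x * mul_conj_eq_one hw - v * w * mul_conj_eq_one hx
    rcases mul_eq_zero.1 hprod with hvw | hx1
    · rcases mul_eq_zero.1 hvw with hv1 | hw1
      · exact Or.inl ⟨by linear_combination hv1, by linear_combination h - hv1⟩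
      · exact Or.inr (Or.inl ⟨by linear_combination hw1, by linear_combination h - hw1⟩)
    · exact Or.inr (Or.inr ⟨by linear_combination hx1, by linear_combination h - hx1⟩)
  · rintro (⟨rfl, h⟩ | ⟨rfl, h⟩ | ⟨rfl, h⟩) <;> linear_combination h

theorem exp_two_pi_I_mul_eq_neg_one_iff (r : ℝ) :
    cexp (2 * π * I * r) = -1 ↔ r ∈ oddFracSet 2 := by
  have hshift : cexp (2 * π * I * r) = -cexp (2 * π * I * ((r - 1 / 2 : ℝ) : ℂ)) := by
    rw [← mul_neg_one (cexp _), ← exp_pi_mul_I, ← Complex.exp_add]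
    push_cast
    ring_nf
  rw [hshift, neg_inj, Complex.exp_eq_one_iff]
  constructor
  · rintro ⟨n, hn⟩
    have hn' : ((r - 1 / 2 : ℝ) : ℂ) = n := by
      apply mul_left_cancel₀ (by simp [pi_ne_zero, I_ne_zero] : 2 * (π : ℂ) * I ≠ 0)
      linear_combination hn
    refine ⟨2 * n + 1, odd_two_mul_add_one n, ?_⟩
    have : r - 1 / 2 = n := by exact_mod_cast hn'
    push_cast
    linarith
  · rintro ⟨m, ⟨n, rfl⟩, rfl⟩
    exact ⟨n, by push_cast; ring⟩

theorem norm_exp_two_pi_I_mul (r : ℝ) : ‖cexp (2 * π * I * r)‖ = 1 := by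
  rw [show 2 * π * I * r = ((2 * π * r : ℝ) : ℂ) * I by push_cast; ring]
  exact norm_exp_ofReal_mul_I _

theorem exp_two_pi_I_mul_add_exp_eq_zero_iff (r s : ℝ) :
    cexp (2 * π * I * r) + cexp (2 * π * I * s) = 0 ↔ s - r ∈ oddFracSet 2 := by
  have hs : cexp (2 * π * I * s) = cexp (2 * π * I * r) * cexp (2 * π * I * (s - r : ℝ)) := by
    rw [← Complex.exp_add]; push_cast; ring_nf
  rw [← exp_two_pi_I_mul_eq_neg_one_iff, hs, ← mul_one_add, mul_eq_zero,
    or_iff_right (Complex.exp_ne_zero _), add_eq_zero_iff_eq_neg']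

theorem mem_maskZeroSet_iff (a b c : ℤ) (ξ : ℝ) :
    ξ ∈ maskZeroSet a b c ↔
      (a * ξ ∈ oddFracSet 2 ∧ ((c - b : ℤ) : ℝ) * ξ ∈ oddFracSet 2) ∨
      (b * ξ ∈ oddFracSet 2 ∧ ((c - a : ℤ) : ℝ) * ξ ∈ oddFracSet 2) ∨
      (c * ξ ∈ oddFracSet 2 ∧ ((b - a : ℤ) : ℝ) * ξ ∈ oddFracSet 2) := by
  have hexp (n : ℤ) : cexp (2 * π * I * n * ξ) = cexp (2 * π * I * ((n * ξ : ℝ) : ℂ)) := by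
    push_cast; ring_nf
  simp only [maskZeroSet, Set.mem_ofPred_eq, hexp]
  rw [one_add_add_add_eq_zero_iff (norm_exp_two_pi_I_mul _) (norm_exp_two_pi_I_mul _)
    (norm_exp_two_pi_I_mul _)]
  simp only [exp_two_pi_I_mul_eq_neg_one_iff, exp_two_pi_I_mul_add_exp_eq_zero_iff, Int.cast_sub,
    sub_mul]

end

theorem mem_oddFracSet_iff {q x : ℝ} (hq : q ≠ 0) :
    x ∈ oddFracSet q ↔ ∃ m : ℤ, Odd m ∧ q * x = m := by
  simp only [oddFracSet, Set.mem_ofPred_eq, eq_div_iff hq, mul_comm x]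

theorem mul_mem_oddFracSet_iff {r : ℝ} (hr : r ≠ 0) (x q : ℝ) :
    r * x ∈ oddFracSet q ↔ x ∈ oddFracSet (r * q) := by
  simp only [oddFracSet, Set.mem_ofPred_eq, mul_comm r q, ← div_div, eq_div_iff hr, mul_comm x]

theorem mul_mem_oddFracSet_two_and_iff {m n : ℤ} (hm : Odd m) (hn : Odd n) (ξ : ℝ) :
    (m * ξ ∈ oddFracSet 2 ∧ n * ξ ∈ oddFracSet 2) ↔ ξ ∈ oddFracSet (2 * Int.gcd m n) := by
  have hg : (Int.gcd m n : ℝ) ≠ 0 := by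
    exact_mod_cast (Int.gcd_pos_of_ne_zero_left n (by rintro rfl; simp at hm)).ne'
  obtain ⟨m', hm'⟩ := Int.gcd_dvd_left m n
  obtain ⟨n', hn'⟩ := Int.gcd_dvd_right m n
  have hmR : (m : ℝ) = Int.gcd m n * m' := by exact_mod_cast hm'
  have hnR : (n : ℝ) = Int.gcd m n * n' := by exact_mod_cast hn'
  simp only [mem_oddFracSet_iff two_ne_zero, mem_oddFracSet_iff (mul_ne_zero two_ne_zero hg)]
  constructor
  · rintro ⟨⟨j, hj, hjξ⟩, ⟨k, -, hkξ⟩⟩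
    -- Bézout: `gcd m n = m A + n B` makes `2 gcd(m, n) ξ = A j + B k` an integer
    have hgR : (Int.gcd m n : ℝ) = m * Int.gcdA m n + n * Int.gcdB m n := by
      exact_mod_cast Int.gcd_eq_gcd_ab m n
    have hp : 2 * (Int.gcd m n : ℝ) * ξ = (Int.gcdA m n * j + Int.gcdB m n * k : ℤ) := by
      push_cast
      linear_combination 2 * ξ * hgR + Int.gcdA m n * hjξ + Int.gcdB m n * hkξ
    refine ⟨_, ?_, hp⟩
    have hj' : j = m' * (Int.gcdA m n * j + Int.gcdB m n * k) := by
      have : (j : ℝ) = m' * (Int.gcdA m n * j + Int.gcdB m n * k : ℤ) := by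
        rw [← hp, ← hjξ, hmR]; ring
      exact_mod_cast this
    exact Int.Odd.of_mul_right (hj' ▸ hj)
  · rintro ⟨p, hp, hpξ⟩
    have hm'odd : Odd m' := Int.Odd.of_mul_right (hm' ▸ hm)
    have hn'odd : Odd n' := Int.Odd.of_mul_right (hn' ▸ hn)
    refine ⟨⟨m' * p, hm'odd.mul hp, ?_⟩, ⟨n' * p, hn'odd.mul hp, ?_⟩⟩
    · push_cast; rw [hmR]; linear_combination (m' : ℝ) * hpξ
    · push_cast; rw [hnR]; linear_combination (n' : ℝ) * hpξ

theorem eq_of_two_pow_mul_eq_two_pow_mul {s s' : ℕ} {x y : ℤ} (hx : Odd x) (hy : Odd y)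
    (h : 2 ^ s * x = 2 ^ s' * y) : s = s' := by
  wlog hss : s ≤ s' generalizing s s' x y
  · exact (this hy hx h.symm (le_of_not_ge hss)).symm
  obtain ⟨d, rfl⟩ := Nat.exists_eq_add_of_le hss
  rcases d with _ | d
  · rfl
  rw [pow_add, mul_assoc] at h
  rw [mul_left_cancel₀ (pow_ne_zero _ two_ne_zero) h, pow_succ', mul_assoc] at hx
  exact absurd hx (Int.not_odd_iff_even.2 (even_two_mul _))

theorem two_pow_mul_mem_oddFracSet_two_and_iff (s : ℕ) {m n : ℤ} (hm : Odd m) (hn : Odd n)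
    (ξ : ℝ) :
    (((2 ^ s * m : ℤ) : ℝ) * ξ ∈ oddFracSet 2 ∧ ((2 ^ s * n : ℤ) : ℝ) * ξ ∈ oddFracSet 2) ↔
      ξ ∈ oddFracSet (2 ^ (s + 1) * Int.gcd m n) := by
  have hcast (k : ℤ) : ((2 ^ s * k : ℤ) : ℝ) * ξ = k * (2 ^ s * ξ) := by push_cast; ring
  rw [hcast, hcast, mul_mem_oddFracSet_two_and_iff hm hn,
    mul_mem_oddFracSet_iff (by positivity), pow_succ, mul_assoc]

theorem not_two_pow_mul_mem_oddFracSet_two_and {s s' : ℕ} (hss : s ≠ s') {m n : ℤ}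
    (hm : Odd m) (hn : Odd n) (ξ : ℝ) :
    ¬ (((2 ^ s * m : ℤ) : ℝ) * ξ ∈ oddFracSet 2 ∧ ((2 ^ s' * n : ℤ) : ℝ) * ξ ∈ oddFracSet 2) := by
  simp only [mem_oddFracSet_iff two_ne_zero]
  rintro ⟨⟨j, hj, hjξ⟩, ⟨k, hk, hkξ⟩⟩
  refine hss (eq_of_two_pow_mul_eq_two_pow_mul (hm.mul hk) (hn.mul hj) ?_)
  have : ((2 ^ s * (m * k) : ℤ) : ℝ) = ((2 ^ s' * (n * j) : ℤ) : ℝ) := by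
    push_cast at hjξ hkξ ⊢
    linear_combination (2 ^ s' * n : ℝ) * hjξ - (2 ^ s * m : ℝ) * hkξ
  exact_mod_cast this

theorem stmt14_general (a b c : ℤ) (t t' : ℕ) (l l' : ℤ)
    (haodd : Odd a) (hcodd : Odd c)
    (hbeven : Even b)
    (hl : Odd l) (hl' : Odd l')
    (hbe : b = 2 ^ t * l) (hcae : c - a = 2 ^ t' * l') :
    (t = t' → maskZeroSet a b c =
      oddFracSet (2 * (Int.gcd a (c - b) : ℝ)) ∪
      oddFracSet (2 * (Int.gcd c (b - a) : ℝ)) ∪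
      oddFracSet (2 ^ (t + 1) * (Int.gcd l l' : ℝ))) ∧
    (t ≠ t' → maskZeroSet a b c =
      oddFracSet (2 * (Int.gcd a (c - b) : ℝ)) ∪
      oddFracSet (2 * (Int.gcd c (b - a) : ℝ))) := by
  have hzero (ξ : ℝ) : ξ ∈ maskZeroSet a b c ↔
      ξ ∈ oddFracSet (2 * Int.gcd a (c - b)) ∨
      (((2 ^ t * l : ℤ) : ℝ) * ξ ∈ oddFracSet 2 ∧ ((2 ^ t' * l' : ℤ) : ℝ) * ξ ∈ oddFracSet 2) ∨
      ξ ∈ oddFracSet (2 * Int.gcd c (b - a)) := by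
    rw [mem_maskZeroSet_iff, mul_mem_oddFracSet_two_and_iff haodd (hcodd.sub_even hbeven),
      mul_mem_oddFracSet_two_and_iff hcodd (hbeven.sub_odd haodd), hcae, ← hbe]
  constructor
  · rintro rfl
    ext ξ
    rw [hzero, two_pow_mul_mem_oddFracSet_two_and_iff t hl hl']
    simp only [Set.mem_union]
    tauto
  · intro htt
    ext ξ
    simp only [hzero, Set.mem_union, not_two_pow_mul_mem_oddFracSet_two_and htt hl hl', false_or]

theorem stmt14 (a b c : ℤ) (t t' : ℕ) (l l' : ℤ)
    (ha : 0 < a) (hac : a < c) (haodd : Odd a) (hcodd : Odd c)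
    (hbeven : Even b) (hb : 0 < b)
    (hgcd : Int.gcd a (Int.gcd b c) = 1)
    (ht : 1 ≤ t) (ht' : 1 ≤ t') (hl : Odd l) (hl' : Odd l')
    (hbe : b = 2 ^ t * l) (hcae : c - a = 2 ^ t' * l') :
    (t = t' → maskZeroSet a b c =
      oddFracSet (2 * (Int.gcd a (c - b) : ℝ)) ∪
      oddFracSet (2 * (Int.gcd c (b - a) : ℝ)) ∪
      oddFracSet (2 ^ (t + 1) * (Int.gcd l l' : ℝ))) ∧
    (t ≠ t' → maskZeroSet a b c =
      oddFracSet (2 * (Int.gcd a (c - b) : ℝ)) ∪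
      oddFracSet (2 * (Int.gcd c (b - a) : ℝ))) :=
  stmt14_general a b c t t' l l' haodd hcodd hbeven hl hl' hbe hcae

end
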